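/- For every nonzero vector v ∈ ℝ³, the orbit G_icos·v = {A·v : A ∈ G_icos} has cardinality 12, 20, 30, or 60. -/

import Mathlib

open Matrix

/-- A 3×3 real matrix is a rotation if it is orthogonal with determinant 1. -/
def IsRotation (A : Matrix (Fin 3) (Fin 3) ℝ) : Prop := Aᵀ * A = 1 ∧ A.det = 1

/-- The action of a 3×3 matrix on ℝ³ by matrix–vector multiplication. -/
noncomputable def act (A : Matrix (Fin 3) (Fin 3) ℝ) (v : EuclideanSpace ℝ (Fin 3)) :
    EuclideanSpace ℝ (Fin 3) := WithLp.toLp 2 (A.mulVec v)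

/-- The orbit of a point under a set of matrices. -/
def orb (G : Set (Matrix (Fin 3) (Fin 3) ℝ)) (v : EuclideanSpace ℝ (Fin 3)) :
    Set (EuclideanSpace ℝ (Fin 3)) := {q | ∃ A ∈ G, act A v = q}

/-- The golden ratio. -/
noncomputable def φ : ℝ := (1 + Real.sqrt 5) / 2

/-- The twelve vertices (0,±1,±φ), (±1,±φ,0), (±φ,0,±1) of a regular icosahedron. -/
noncomputable def Vicos : Set (EuclideanSpace ℝ (Fin 3)) :=
  {p | ∃ s₁ s₂ : ℝ, (s₁ = 1 ∨ s₁ = -1) ∧ (s₂ = 1 ∨ s₂ = -1) ∧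
    (p = ![0, s₁, s₂ * φ] ∨ p = ![s₁, s₂ * φ, 0] ∨ p = ![s₁ * φ, 0, s₂])}

/-- The icosahedral rotation group: all rotations preserving `Vicos` setwise. -/
noncomputable def Gicos : Set (Matrix (Fin 3) (Fin 3) ℝ) :=
  {A | IsRotation A ∧ act A '' Vicos = Vicos}

/-!
Doubling a rotation of the icosahedron clears all denominators: the matrices `twiceRot j` below
have entries in `ℤ[φ]`, the numbers `a + bω` with `ω² = 1 + ω`, which embeds in `ℝ` by `ω ↦ φ`.
Every identity needed about them is decided by computation in `ℤ[φ]` and transported to `ℝ`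
along this embedding.

These 60 matrices, halved, are all of `Gicos`: a rotation preserving `Vicos` sends the independent
vertices `(0, 1, φ)`, `(0, -1, φ)`, `(1, φ, 0)` to vertices with the same dot products and the
same triple product, each such triple of vertices is the image of those three under one of the 60,
and a matrix is determined by its values on three independent vectors.

A rotation `R ≠ 1` of the list fixes only the line spanned by the cross product of two independent
rows of `R - 1`. So the stabilizer of `v ≠ 0` is trivial or is the stabilizer of such an axis, whose
order, 2, 3 or 5, is again computed; the orbit–stabilizer theorem gives orbits of size
60, 30, 20 or 12.
-/

open Finset Pointwise

local notation "ℤ[φ]" => QuadraticAlgebra ℤ 1 1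

local notation "ω" => (QuadraticAlgebra.omega : ℤ[φ])

local notation "SO₃" => specialOrthogonalGroup (Fin 3) ℝ

section CrossProduct

variable {R S : Type*} [CommRing R] [CommRing S]

theorem RingHom.comp_crossProduct (f : R →+* S) (a b : Fin 3 → R) :
    f ∘ (a ⨯₃ b) = (f ∘ a) ⨯₃ (f ∘ b) := by
  ext i
  fin_cases i <;> simp [cross_apply]

theorem of_mulVec_eq_mul_transpose (A : Matrix (Fin 3) (Fin 3) R) (x y z : Fin 3 → R) :
    of ![A *ᵥ x, A *ᵥ y, A *ᵥ z] = of ![x, y, z] * Aᵀ := by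
  refine funext fun i => ?_
  change _ = ![x, y, z] i ᵥ* Aᵀ
  rw [vecMul_transpose]
  fin_cases i <;> rfl

theorem triple_product_mulVec (A : Matrix (Fin 3) (Fin 3) R) (x y z : Fin 3 → R) :
    (A *ᵥ x) ⬝ᵥ (A *ᵥ y) ⨯₃ (A *ᵥ z) = A.det * (x ⬝ᵥ y ⨯₃ z) := by
  rw [triple_product_eq_det, triple_product_eq_det]
  change (of ![A *ᵥ x, A *ᵥ y, A *ᵥ z]).det = A.det * (of ![x, y, z]).det
  rw [of_mulVec_eq_mul_transpose, det_mul, det_transpose, mul_comm]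

theorem dotProduct_mulVec_mulVec_of_transpose_mul_self {A : Matrix (Fin 3) (Fin 3) R}
    (hA : Aᵀ * A = 1) (x y : Fin 3 → R) : (A *ᵥ x) ⬝ᵥ (A *ᵥ y) = x ⬝ᵥ y := by
  rw [← vecMul_transpose, dotProduct_mulVec, vecMul_vecMul, hA, vecMul_one]

theorem eq_of_mulVec_eq_of_triple_product_ne_zero {F : Type*} [Field F]
    {A B : Matrix (Fin 3) (Fin 3) F} {x y z : Fin 3 → F} (hxyz : x ⬝ᵥ y ⨯₃ z ≠ 0)
    (hx : A *ᵥ x = B *ᵥ x) (hy : A *ᵥ y = B *ᵥ y) (hz : A *ᵥ z = B *ᵥ z) : A = B := by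
  have hP : IsUnit (of ![x, y, z]) := by
    rw [isUnit_iff_isUnit_det, isUnit_iff_ne_zero]
    change det ![x, y, z] ≠ 0
    rwa [← triple_product_eq_det]
  have h : of ![x, y, z] * Aᵀ = of ![x, y, z] * Bᵀ := by
    rw [← of_mulVec_eq_mul_transpose, ← of_mulVec_eq_mul_transpose, hx, hy, hz]
  exact transpose_injective (hP.mul_left_cancel h)

theorem exists_eq_smul_cross_of_mulVec_eq_zero {F : Type*} [Field F]
    {D : Matrix (Fin 3) (Fin 3) F} {x : Fin 3 → F} (hx : D *ᵥ x = 0) {i k : Fin 3}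
    (hik : D i ⨯₃ D k ≠ 0) : ∃ c : F, x = c • D i ⨯₃ D k := by
  have hperp : D i ⨯₃ D k ⨯₃ x = 0 := by
    rw [cross_cross_eq_smul_sub_smul, show D i ⬝ᵥ x = 0 from congrFun hx i,
      show D k ⬝ᵥ x = 0 from congrFun hx k, zero_smul, zero_smul, sub_zero]
  have hdep : ¬LinearIndependent F ![D i ⨯₃ D k, x] := by
    rw [← crossProduct_ne_zero_iff_linearIndependent, hperp, not_ne_iff]
  obtain ⟨c, hc⟩ : ∃ c : F, c • D i ⨯₃ D k = x := by
    simpa [LinearIndependent.pair_iff' hik] using hdep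
  exact ⟨c, hc.symm⟩

end CrossProduct

theorem goldenRatio_mul_self : φ * φ = (1 : ℤ) • 1 + (1 : ℤ) • φ := by
  rw [one_smul, one_smul, ← sq, add_comm]
  exact Real.goldenRatio_sq

noncomputable def toReal : ℤ[φ] →+* ℝ := (QuadraticAlgebra.lift ⟨φ, goldenRatio_mul_self⟩).toRingHom

theorem toReal_apply (x : ℤ[φ]) : toReal x = x.re + x.im * φ := by
  simp [toReal, zsmul_eq_mul]

theorem toReal_injective : Function.Injective toReal := by
  refine (injective_iff_map_eq_zero toReal).mpr fun x hx => ?_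
  rw [toReal_apply] at hx
  have him : x.im = 0 := by
    by_contra h
    refine (irrational_iff_ne_rational φ).mp Real.goldenRatio_irrational (-x.re) x.im h ?_
    field_simp
    push_cast
    linarith
  ext
  · simpa [him] using hx
  · exact him

theorem toReal_omega : toReal ω = φ := by simp [toReal_apply]

noncomputable def realVec (a : Fin 3 → ℤ[φ]) : EuclideanSpace ℝ (Fin 3) :=
  WithLp.toLp 2 (toReal ∘ a)

theorem realVec_nsmul (n : ℕ) (a : Fin 3 → ℤ[φ]) : realVec (n • a) = (n : ℝ) • realVec a := by
  ext i
  simp [realVec]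

theorem realVec_injective : Function.Injective realVec := fun _ _ h =>
  funext fun i => toReal_injective (congrFun (congrArg WithLp.ofLp h) i)

def twiceRot : Fin 60 → Matrix (Fin 3) (Fin 3) ℤ[φ] := ![
  !![2, 0, 0; 0, 2, 0; 0, 0, 2],
  !![ω - 1, -ω, 1; ω, 1, ω - 1; -1, ω - 1, ω],
  !![-ω, -1, ω - 1; 1, 1 - ω, ω; 1 - ω, ω, 1],
  !![-ω, 1, 1 - ω; -1, 1 - ω, ω; ω - 1, ω, 1],
  !![ω - 1, ω, -1; -ω, 1, ω - 1; 1, ω - 1, ω],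
  !![ω, 1, ω - 1; -1, ω - 1, ω; ω - 1, -ω, 1],
  !![1, 1 - ω, ω; 1 - ω, ω, 1; -ω, -1, ω - 1],
  !![-ω, 1, ω - 1; 1, ω - 1, ω; ω - 1, ω, -1],
  !![-1, 1 - ω, ω; ω - 1, ω, 1; -ω, 1, 1 - ω],
  !![0, 2, 0; 0, 0, 2; 2, 0, 0],
  !![1 - ω, ω, 1; -ω, -1, ω - 1; 1, 1 - ω, ω],
  !![-1, ω - 1, ω; ω - 1, -ω, 1; ω, 1, ω - 1],
  !![1, ω - 1, ω; ω - 1, ω, -1; -ω, 1, ω - 1],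
  !![0, 0, 2; 2, 0, 0; 0, 2, 0],
  !![ω - 1, ω, 1; -ω, 1, 1 - ω; -1, 1 - ω, ω],
  !![ω, -1, ω - 1; -1, 1 - ω, ω; 1 - ω, -ω, -1],
  !![1 - ω, -ω, 1; -ω, 1, ω - 1; -1, 1 - ω, -ω],
  !![ω, 1, 1 - ω; 1, 1 - ω, ω; ω - 1, -ω, -1],
  !![-2, 0, 0; 0, 2, 0; 0, 0, -2],
  !![1 - ω, ω, -1; ω, 1, ω - 1; 1, 1 - ω, -ω],
  !![-1, 1 - ω, ω; 1 - ω, -ω, -1; ω, -1, ω - 1],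
  !![1, 1 - ω, ω; ω - 1, -ω, -1; ω, 1, 1 - ω],
  !![-ω, 1, ω - 1; -1, 1 - ω, -ω; 1 - ω, -ω, 1],
  !![ω, 1, ω - 1; 1, 1 - ω, -ω; 1 - ω, ω, -1],
  !![0, 2, 0; 0, 0, -2; -2, 0, 0],
  !![1, ω - 1, ω; 1 - ω, -ω, 1; ω, -1, 1 - ω],
  !![0, 0, 2; -2, 0, 0; 0, -2, 0],
  !![ω - 1, ω, 1; ω, -1, ω - 1; 1, ω - 1, -ω],
  !![-1, ω - 1, ω; 1 - ω, ω, -1; -ω, -1, 1 - ω],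
  !![1 - ω, ω, 1; ω, 1, 1 - ω; -1, ω - 1, -ω],
  !![-2, 0, 0; 0, -2, 0; 0, 0, 2],
  !![1 - ω, -ω, 1; ω, -1, 1 - ω; 1, ω - 1, ω],
  !![ω, -1, ω - 1; 1, ω - 1, -ω; ω - 1, ω, 1],
  !![1 - ω, ω, -1; -ω, -1, 1 - ω; -1, ω - 1, ω],
  !![ω, 1, 1 - ω; -1, ω - 1, -ω; 1 - ω, ω, 1],
  !![ω, -1, 1 - ω; 1, ω - 1, ω; 1 - ω, -ω, 1],
  !![0, -2, 0; 0, 0, 2; -2, 0, 0],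
  !![-ω, -1, 1 - ω; -1, ω - 1, ω; 1 - ω, ω, -1],
  !![1, ω - 1, -ω; ω - 1, ω, 1; ω, -1, ω - 1],
  !![-1, ω - 1, -ω; 1 - ω, ω, 1; ω, 1, 1 - ω],
  !![1 - ω, -ω, -1; ω, -1, ω - 1; -1, 1 - ω, ω],
  !![ω - 1, -ω, -1; ω, 1, 1 - ω; 1, 1 - ω, ω],
  !![-1, 1 - ω, -ω; 1 - ω, -ω, 1; -ω, 1, ω - 1],
  !![1, 1 - ω, -ω; 1 - ω, ω, -1; ω, 1, ω - 1],
  !![0, 0, -2; -2, 0, 0; 0, 2, 0],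
  !![2, 0, 0; 0, -2, 0; 0, 0, -2],
  !![-ω, -1, ω - 1; -1, ω - 1, -ω; ω - 1, -ω, -1],
  !![ω - 1, -ω, 1; -ω, -1, 1 - ω; 1, 1 - ω, -ω],
  !![-ω, 1, 1 - ω; 1, ω - 1, -ω; 1 - ω, -ω, -1],
  !![ω - 1, ω, -1; ω, -1, 1 - ω; -1, 1 - ω, -ω],
  !![0, -2, 0; 0, 0, -2; 2, 0, 0],
  !![-ω, -1, 1 - ω; 1, 1 - ω, -ω; ω - 1, -ω, 1],
  !![-1, ω - 1, -ω; ω - 1, -ω, -1; -ω, -1, ω - 1],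
  !![ω, -1, 1 - ω; -1, 1 - ω, -ω; ω - 1, ω, -1],
  !![1, ω - 1, -ω; 1 - ω, -ω, -1; -ω, 1, 1 - ω],
  !![ω - 1, -ω, -1; -ω, -1, ω - 1; -1, ω - 1, -ω],
  !![1, 1 - ω, -ω; ω - 1, -ω, 1; -ω, -1, 1 - ω],
  !![0, 0, -2; 2, 0, 0; 0, -2, 0],
  !![1 - ω, -ω, -1; -ω, 1, 1 - ω; 1, ω - 1, -ω],
  !![-1, 1 - ω, -ω; ω - 1, ω, -1; ω, -1, 1 - ω]]

def vertex : Fin 12 → Fin 3 → ℤ[φ] :=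
  ![![0, 1, ω], ![1, ω, 0], ![ω, 0, 1], ![0, 1, -ω],
    ![1, -ω, 0], ![ω, 0, -1], ![0, -1, ω], ![-1, ω, 0],
    ![-ω, 0, 1], ![0, -1, -ω], ![-1, -ω, 0], ![-ω, 0, -1]]

theorem Vicos_eq_range : Vicos = Set.range (realVec ∘ vertex) := by
  ext p
  rw [← WithLp.toLp_ofLp 2 p]
  generalize WithLp.ofLp p = q
  simp [Vicos, realVec, Fin.exists_fin_succ, or_and_right, exists_or, vertex, funext_iff,
    Fin.forall_fin_succ, toReal_omega, @eq_comm _ _ q, or_assoc]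

theorem twiceRot_transpose_mul_self : ∀ j, (twiceRot j)ᵀ * twiceRot j = 4 := by decide +kernel

theorem det_twiceRot : ∀ j, (twiceRot j).det = 8 := by decide +kernel

theorem twiceRot_injective : Function.Injective twiceRot := by decide +kernel

theorem twiceRot_zero : twiceRot 0 = 2 := by decide +kernel

theorem exists_twiceRot_mulVec_vertex : ∀ j i, ∃ i', twiceRot j *ᵥ vertex i = 2 • vertex i' := by
  decide +kernel

theorem triple_product_vertex_ne_zero : vertex 0 ⬝ᵥ vertex 6 ⨯₃ vertex 1 ≠ 0 := by decide +kernel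

theorem exists_twiceRot_of_dotProduct_eq : ∀ i₁ i₂ i₃ : Fin 12,
    vertex i₁ ⬝ᵥ vertex i₂ = vertex 0 ⬝ᵥ vertex 6 →
    vertex i₁ ⬝ᵥ vertex i₃ = vertex 0 ⬝ᵥ vertex 1 →
    vertex i₂ ⬝ᵥ vertex i₃ = vertex 6 ⬝ᵥ vertex 1 →
    vertex i₁ ⬝ᵥ vertex i₂ ⨯₃ vertex i₃ = vertex 0 ⬝ᵥ vertex 6 ⨯₃ vertex 1 →
    ∃ j, twiceRot j *ᵥ vertex 0 = 2 • vertex i₁ ∧ twiceRot j *ᵥ vertex 6 = 2 • vertex i₂ ∧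
      twiceRot j *ᵥ vertex 1 = 2 • vertex i₃ := by
  decide +kernel

def fixingIndices (a : Fin 3 → ℤ[φ]) : Finset (Fin 60) := {j | twiceRot j *ᵥ a = 2 • a}

theorem exists_axis_card_fixingIndices_mem : ∀ j ≠ 0, ∃ i k,
    (twiceRot j - 2) i ⨯₃ (twiceRot j - 2) k ≠ 0 ∧
      #(fixingIndices ((twiceRot j - 2) i ⨯₃ (twiceRot j - 2) k)) ∈ ({2, 3, 5} : Finset ℕ) := by
  decide +kernel

theorem isRotation_iff_mem (A : Matrix (Fin 3) (Fin 3) ℝ) : IsRotation A ↔ A ∈ SO₃ := by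
  rw [mem_specialOrthogonalGroup_iff, mem_orthogonalGroup_iff']
  rfl

noncomputable def rotMatrix (j : Fin 60) : Matrix (Fin 3) (Fin 3) ℝ :=
  (2 : ℝ)⁻¹ • toReal.mapMatrix (twiceRot j)

theorem rotMatrix_mem (j : Fin 60) : rotMatrix j ∈ SO₃ := by
  refine (isRotation_iff_mem _).mp ⟨?_, ?_⟩
  · simp [rotMatrix, ← transpose_map, ← Matrix.map_mul, twiceRot_transpose_mul_self, map_ofNat,
      ← diagonal_ofNat, ← diagonal_one, ← diagonal_smul]
    norm_num
  · rw [rotMatrix, det_smul, ← RingHom.map_det, det_twiceRot, map_ofNat]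
    norm_num

noncomputable def rot (j : Fin 60) : SO₃ := ⟨rotMatrix j, rotMatrix_mem j⟩

theorem rot_smul_realVec (j : Fin 60) (a : Fin 3 → ℤ[φ]) :
    rot j • realVec a = (2 : ℝ)⁻¹ • realVec (twiceRot j *ᵥ a) := by
  ext i
  simp [rot, rotMatrix, realVec, RingHom.map_mulVec]

theorem rot_smul_realVec_eq_iff (j : Fin 60) (a b : Fin 3 → ℤ[φ]) :
    rot j • realVec a = realVec b ↔ twiceRot j *ᵥ a = 2 • b := by
  rw [rot_smul_realVec, inv_smul_eq_iff₀ two_ne_zero, ← realVec_injective.eq_iff, realVec_nsmul]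
  norm_num

theorem rotMatrix_sub_one (j : Fin 60) :
    rotMatrix j - 1 = (2 : ℝ)⁻¹ • toReal.mapMatrix (twiceRot j - 2) := by
  rw [rotMatrix, map_sub, map_ofNat, smul_sub]
  simp [← diagonal_ofNat, ← diagonal_one, ← diagonal_smul]

theorem rot_smul_eq_self_iff (j : Fin 60) (v : EuclideanSpace ℝ (Fin 3)) :
    rot j • v = v ↔ toReal.mapMatrix (twiceRot j - 2) *ᵥ WithLp.ofLp v = 0 := by
  rw [← (WithLp.ofLp_injective 2).eq_iff, ← sub_eq_zero]
  change rotMatrix j *ᵥ WithLp.ofLp v - WithLp.ofLp v = 0 ↔ _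
  nth_rw 2 [← one_mulVec (WithLp.ofLp v)]
  rw [← sub_mulVec, rotMatrix_sub_one, smul_mulVec, smul_eq_zero]
  norm_num

theorem smul_realVec_eq_iff (g : SO₃) (a b : Fin 3 → ℤ[φ]) :
    g • realVec a = realVec b ↔ (g : Matrix (Fin 3) (Fin 3) ℝ) *ᵥ (toReal ∘ a) = toReal ∘ b :=
  (WithLp.toLp_injective 2).eq_iff

theorem dotProduct_eq_of_smul_realVec {g : SO₃} {a b a' b' : Fin 3 → ℤ[φ]}
    (ha : g • realVec a = realVec a') (hb : g • realVec b = realVec b') : a' ⬝ᵥ b' = a ⬝ᵥ b := by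
  rw [smul_realVec_eq_iff] at ha hb
  apply toReal_injective
  rw [RingHom.map_dotProduct, RingHom.map_dotProduct, ← ha, ← hb,
    dotProduct_mulVec_mulVec_of_transpose_mul_self ((isRotation_iff_mem g).mpr g.2).1]

theorem triple_product_eq_of_smul_realVec {g : SO₃} {a b c a' b' c' : Fin 3 → ℤ[φ]}
    (ha : g • realVec a = realVec a') (hb : g • realVec b = realVec b')
    (hc : g • realVec c = realVec c') : a' ⬝ᵥ b' ⨯₃ c' = a ⬝ᵥ b ⨯₃ c := by
  rw [smul_realVec_eq_iff] at ha hb hc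
  apply toReal_injective
  rw [RingHom.map_dotProduct, RingHom.comp_crossProduct, RingHom.map_dotProduct,
    RingHom.comp_crossProduct, ← ha, ← hb, ← hc, triple_product_mulVec,
    ((isRotation_iff_mem g).mpr g.2).2, one_mul]

def icosahedralGroup : Subgroup SO₃ := MulAction.stabilizer SO₃ Vicos

set_option synthInstance.maxHeartbeats 100000 in
theorem orb_Gicos_eq_orbit (v : EuclideanSpace ℝ (Fin 3)) :
    orb Gicos v = MulAction.orbit icosahedralGroup v := by
  ext q
  constructor
  · rintro ⟨A, ⟨hA, hAV⟩, rfl⟩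
    exact ⟨⟨⟨A, (isRotation_iff_mem A).mp hA⟩, hAV⟩, rfl⟩
  · rintro ⟨g, rfl⟩
    exact ⟨g, ⟨(isRotation_iff_mem _).mpr g.1.2, g.2⟩, rfl⟩

theorem rot_mem_icosahedralGroup (j : Fin 60) : rot j ∈ icosahedralGroup := by
  have hsub : rot j • Vicos ⊆ Vicos := by
    rw [Vicos_eq_range]
    rintro _ ⟨_, ⟨i, rfl⟩, rfl⟩
    obtain ⟨i', h⟩ := exists_twiceRot_mulVec_vertex j i
    exact ⟨i', ((rot_smul_realVec_eq_iff j _ _).mpr h).symm⟩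
  exact Set.eq_of_subset_of_ncard_le hsub (Set.ncard_smul_set _ _).ge
    (Vicos_eq_range ▸ Set.finite_range _)

theorem exists_rot_eq {g : SO₃} (hg : g ∈ icosahedralGroup) : ∃ j, rot j = g := by
  have hvertex : ∀ i, ∃ i', g • realVec (vertex i) = realVec (vertex i') := by
    intro i
    have : g • realVec (vertex i) ∈ g • Vicos :=
      Set.smul_mem_smul_set (Vicos_eq_range ▸ ⟨i, rfl⟩)
    rw [MulAction.mem_stabilizer_iff.mp hg, Vicos_eq_range] at this
    obtain ⟨i', h⟩ := this
    exact ⟨i', h.symm⟩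
  obtain ⟨i₁, h₁⟩ := hvertex 0
  obtain ⟨i₂, h₂⟩ := hvertex 6
  obtain ⟨i₃, h₃⟩ := hvertex 1
  obtain ⟨j, hj₁, hj₂, hj₃⟩ := exists_twiceRot_of_dotProduct_eq i₁ i₂ i₃
    (dotProduct_eq_of_smul_realVec h₁ h₂) (dotProduct_eq_of_smul_realVec h₁ h₃)
    (dotProduct_eq_of_smul_realVec h₂ h₃) (triple_product_eq_of_smul_realVec h₁ h₂ h₃)
  rw [← rot_smul_realVec_eq_iff, ← h₁] at hj₁
  rw [← rot_smul_realVec_eq_iff, ← h₂] at hj₂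
  rw [← rot_smul_realVec_eq_iff, ← h₃] at hj₃
  have hframe : (toReal ∘ vertex 0) ⬝ᵥ (toReal ∘ vertex 6) ⨯₃ (toReal ∘ vertex 1) ≠ 0 := by
    rw [← RingHom.comp_crossProduct, ← RingHom.map_dotProduct]
    exact (map_ne_zero_iff _ toReal_injective).mpr triple_product_vertex_ne_zero
  exact ⟨j, Subtype.ext (eq_of_mulVec_eq_of_triple_product_ne_zero hframe
    (congrArg WithLp.ofLp hj₁) (congrArg WithLp.ofLp hj₂) (congrArg WithLp.ofLp hj₃))⟩

theorem rot_injective : Function.Injective rot := fun _ _ h =>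
  twiceRot_injective (map_injective toReal_injective
    (smul_right_injective _ (inv_ne_zero two_ne_zero) (congrArg Subtype.val h)))

noncomputable def rotEquiv : Fin 60 ≃ icosahedralGroup :=
  Equiv.ofBijective (fun j => ⟨rot j, rot_mem_icosahedralGroup j⟩)
    ⟨fun _ _ h => rot_injective (congrArg Subtype.val h),
      fun g => (exists_rot_eq g.2).imp fun _ hj => Subtype.ext hj⟩

theorem card_icosahedralGroup : Nat.card icosahedralGroup = 60 := by
  rw [← Nat.card_congr rotEquiv, Nat.card_fin]

theorem card_stabilizer_icosahedralGroup (v : EuclideanSpace ℝ (Fin 3)) :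
    Nat.card (MulAction.stabilizer icosahedralGroup v) = {j | rot j • v = v}.ncard := by
  rw [← Nat.card_coe_set_eq]
  exact Nat.card_congr (rotEquiv.subtypeEquiv fun _ => Iff.rfl).symm

theorem exists_eq_smul_realVec_of_rot_smul_eq {j : Fin 60} {v : EuclideanSpace ℝ (Fin 3)}
    (hv : rot j • v = v) {i k : Fin 3} (hik : (twiceRot j - 2) i ⨯₃ (twiceRot j - 2) k ≠ 0) :
    ∃ c : ℝ, v = c • realVec ((twiceRot j - 2) i ⨯₃ (twiceRot j - 2) k) := by
  rw [rot_smul_eq_self_iff] at hv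
  have hrows : toReal.mapMatrix (twiceRot j - 2) i ⨯₃ toReal.mapMatrix (twiceRot j - 2) k =
      WithLp.ofLp (realVec ((twiceRot j - 2) i ⨯₃ (twiceRot j - 2) k)) :=
    (RingHom.comp_crossProduct toReal _ _).symm
  have hne : WithLp.ofLp (realVec ((twiceRot j - 2) i ⨯₃ (twiceRot j - 2) k)) ≠ 0 :=
    (map_ne_zero_iff (toReal.compLeft (Fin 3)) toReal_injective.comp_left).mpr hik
  obtain ⟨c, hc⟩ := exists_eq_smul_cross_of_mulVec_eq_zero hv (hrows ▸ hne)
  exact ⟨c, congrArg (WithLp.toLp 2) (hc.trans (congrArg _ hrows))⟩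

theorem ncard_setOf_rot_smul_eq_mem {v : EuclideanSpace ℝ (Fin 3)} (hv : v ≠ 0) :
    {j | rot j • v = v}.ncard ∈ ({1, 2, 3, 5} : Finset ℕ) := by
  by_cases htriv : ∀ j, rot j • v = v → j = 0
  · have h0 : rot 0 • v = v := by
      rw [rot_smul_eq_self_iff, twiceRot_zero, sub_self, map_zero, zero_mulVec]
    rw [(Set.eq_singleton_iff_unique_mem (s := {j | rot j • v = v})).mpr ⟨h0, htriv⟩,
      Set.ncard_singleton]
    decide
  push Not at htriv
  obtain ⟨j, hjv, hj⟩ := htriv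
  obtain ⟨i, k, hik, hcard⟩ := exists_axis_card_fixingIndices_mem j hj
  obtain ⟨c, rfl⟩ := exists_eq_smul_realVec_of_rot_smul_eq hjv hik
  have hc : c ≠ 0 := by
    rintro rfl
    exact hv (zero_smul _ _)
  have hfix : {j' | rot j' • c • realVec ((twiceRot j - 2) i ⨯₃ (twiceRot j - 2) k) =
      c • realVec ((twiceRot j - 2) i ⨯₃ (twiceRot j - 2) k)} =
      fixingIndices ((twiceRot j - 2) i ⨯₃ (twiceRot j - 2) k) := by
    ext j'
    simp [fixingIndices, smul_comm (rot j') c, smul_right_inj hc, rot_smul_realVec_eq_iff]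
  rw [hfix, Set.ncard_coe_finset]
  simp only [Finset.mem_insert, Finset.mem_singleton] at hcard ⊢
  tauto

/-- Every orbit of a nonzero vector under the icosahedral rotation group has
cardinality 12, 20, 30, or 60. -/
theorem icosahedral_orbit_card (v : EuclideanSpace ℝ (Fin 3)) (hv : v ≠ 0) :
    (orb Gicos v).ncard = 12 ∨ (orb Gicos v).ncard = 20 ∨ (orb Gicos v).ncard = 30 ∨
      (orb Gicos v).ncard = 60 := by
  have h := (MulAction.stabilizer icosahedralGroup v).card_mul_index
  rw [card_icosahedralGroup, MulAction.index_stabilizer, ← orb_Gicos_eq_orbit,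
    card_stabilizer_icosahedralGroup] at h
  have hstab := ncard_setOf_rot_smul_eq_mem hv
  simp only [Finset.mem_insert, Finset.mem_singleton] at hstab
  rcases hstab with hs | hs | hs | hs <;> rw [hs] at h <;> omega
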